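/- A C² function u on ℝ is a solution of T_κ u = iλ u if and only if u solves the generalized eigenvalue problem x u''(x) + (κ+1) u'(x) = iλ (x u'(x) + u(x)) for all x. -/

import Mathlib

/-!
Off the origin, `T_κ u = μ u` is equivalent, after multiplying by `x`, to the vanishing of
`D(x) = x u'(x) + κ (u(x) - u(0)) - μ x u(x)`, and `D(0) = 0` holds for every `u`.
Since `D' = x u'' + (κ + 1) u' - μ (x u' + u)`, `D ≡ 0` if and only if the generalized eigenvalue
equation holds everywhere; at `x = 0` that equation reads `(1 + κ) u'(0) = μ u(0)`, which is the
eigen equation at the origin.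
-/

/-- The one-variable Dunkl-type operator with projection term,
extended by continuity at `x = 0` by the value `(1 + κ) f'(0)`. -/
noncomputable def Tkappa (κ : ℂ) (f : ℝ → ℂ) (x : ℝ) : ℂ :=
  if x = 0 then (1 + κ) * deriv f 0 else deriv f x + κ * (f x - f 0) / x

lemma forall_eq_zero_iff_forall_deriv_eq_zero {𝕜 E : Type*} [RCLike 𝕜]
    [NormedAddCommGroup E] [NormedSpace 𝕜 E] {f f' : 𝕜 → E}
    (hf : ∀ x, HasDerivAt f (f' x) x) (h0 : f 0 = 0) :
    (∀ x, f x = 0) ↔ ∀ x, f' x = 0 := by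
  constructor
  · intro hzero x
    have hconst : f = fun _ => 0 := funext hzero
    exact (hf x).unique (hconst ▸ hasDerivAt_const x 0)
  · intro hzero x
    rw [← h0]
    exact is_const_of_deriv_eq_zero (fun y => (hf y).differentiableAt)
      (fun y => (hzero y) ▸ (hf y).deriv) x 0

/-- `x (T_κ u - μ u)(x)` for `x ≠ 0`, written without division. -/
noncomputable def scaledEigenDefect (κ μ : ℂ) (u : ℝ → ℂ) (x : ℝ) : ℂ :=
  x * deriv u x + κ * (u x - u 0) - μ * (x * u x)

section

variable (κ μ : ℂ) (u : ℝ → ℂ)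

@[simp]
lemma Tkappa_zero : Tkappa κ u 0 = (1 + κ) * deriv u 0 := if_pos rfl

@[simp]
lemma scaledEigenDefect_zero : scaledEigenDefect κ μ u 0 = 0 := by
  simp [scaledEigenDefect]

lemma Tkappa_eq_mul_iff_scaledEigenDefect_eq_zero {x : ℝ} (hx : x ≠ 0) :
    Tkappa κ u x = μ * u x ↔ scaledEigenDefect κ μ u x = 0 := by
  have hxc : (x : ℂ) ≠ 0 := Complex.ofReal_ne_zero.mpr hx
  have hscale : (x : ℂ) * (Tkappa κ u x - μ * u x) = scaledEigenDefect κ μ u x := by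
    rw [Tkappa, if_neg hx, scaledEigenDefect]
    field_simp
  rw [← sub_eq_zero, ← hscale, mul_eq_zero, or_iff_right hxc]

lemma forall_Tkappa_eq_mul_iff :
    (∀ x, Tkappa κ u x = μ * u x) ↔
      (1 + κ) * deriv u 0 = μ * u 0 ∧ ∀ x, scaledEigenDefect κ μ u x = 0 := by
  refine ⟨fun h => ⟨Tkappa_zero κ u ▸ h 0, fun x => ?_⟩, fun ⟨h0, h⟩ x => ?_⟩
  · rcases eq_or_ne x 0 with rfl | hx
    · exact scaledEigenDefect_zero κ μ u
    · exact (Tkappa_eq_mul_iff_scaledEigenDefect_eq_zero κ μ u hx).mp (h x)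
  · rcases eq_or_ne x 0 with rfl | hx
    · rwa [Tkappa_zero]
    · exact (Tkappa_eq_mul_iff_scaledEigenDefect_eq_zero κ μ u hx).mpr (h x)

lemma hasDerivAt_scaledEigenDefect {x : ℝ} (hu : DifferentiableAt ℝ u x)
    (hu' : DifferentiableAt ℝ (deriv u) x) :
    HasDerivAt (scaledEigenDefect κ μ u)
      (x * deriv (deriv u) x + (κ + 1) * deriv u x - μ * (x * deriv u x + u x)) x := by
  have hid : HasDerivAt (fun y : ℝ => (y : ℂ)) 1 x := (hasDerivAt_id x).ofReal_comp
  exact (((hid.mul hu'.hasDerivAt).add ((hu.hasDerivAt.sub_const (u 0)).const_mul κ)).sub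
    ((hid.mul hu.hasDerivAt).const_mul μ)).congr_deriv (by ring)

end

theorem Tkappa_eigen_iff_generalized_eigen_general (κ lam : ℂ)
    (u : ℝ → ℂ) (hu : ContDiff ℝ 2 u) :
    (∀ x : ℝ, Tkappa κ u x = Complex.I * lam * u x) ↔
      (∀ x : ℝ, (x : ℂ) * deriv (deriv u) x + (κ + 1) * deriv u x =
        Complex.I * lam * ((x : ℂ) * deriv u x + u x)) := by
  set μ := Complex.I * lam
  have hD : ∀ x, HasDerivAt (scaledEigenDefect κ μ u)
      (x * deriv (deriv u) x + (κ + 1) * deriv u x - μ * (x * deriv u x + u x)) x :=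
    fun x => hasDerivAt_scaledEigenDefect κ μ u (hu.differentiable two_ne_zero x)
      (hu.differentiable_deriv_two x)
  simp_rw [forall_Tkappa_eq_mul_iff, forall_eq_zero_iff_forall_deriv_eq_zero hD
    (scaledEigenDefect_zero κ μ u), sub_eq_zero]
  refine ⟨And.right, fun h => ⟨?_, h⟩⟩
  simpa [add_comm] using h 0

theorem Tkappa_eigen_iff_generalized_eigen (κ lam : ℂ) (hκ : κ ≠ 0)
    (u : ℝ → ℂ) (hu : ContDiff ℝ 2 u) :
    (∀ x : ℝ, Tkappa κ u x = Complex.I * lam * u x) ↔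
      (∀ x : ℝ, (x : ℂ) * deriv (deriv u) x + (κ + 1) * deriv u x =
        Complex.I * lam * ((x : ℂ) * deriv u x + u x)) :=
  Tkappa_eigen_iff_generalized_eigen_general κ lam u hu
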